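/- arXiv:2209.04952 — 2 statements merged into one kernel-verified Lean document; each statement's English description precedes it below -/
import Mathlib

section
/- The size of the intersection of the m-mismatch neighborhoods of two k-mers α and β depends only on k, m, |Σ|, and the Hamming distance d(α,β), and not on the actual k-mers α and β or the positions where they differ. Formally, if d(α,β) = d(α',β'), then |N_{k,m}(α) ∩ N_{k,m}(β)| = |N_{k,m}(α') ∩ N_{k,m}(β')|. -/
open Finset

private lemma exists_perm_pair {σ : Type*} [DecidableEq σ] (a b a' b' : σ)
    (h : a = b ↔ a' = b') : ∃ g : Equiv.Perm σ, g a = a' ∧ g b = b' := by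
  by_cases hab : a = b
  · have hab' := h.mp hab
    subst hab; subst hab'
    exact ⟨Equiv.swap a a', Equiv.swap_apply_left _ _, Equiv.swap_apply_left _ _⟩
  · have hab' : a' ≠ b' := fun hh => hab (h.mpr hh)
    set b₂ := Equiv.swap a a' b with hb2
    have hb₂a' : b₂ ≠ a' := by
      intro hh
      apply hab
      have h2 : Equiv.swap a a' b = Equiv.swap a a' a := by
        rw [Equiv.swap_apply_left]; exact hh
      exact ((Equiv.swap a a').injective h2).symm
    refine ⟨(Equiv.swap a a').trans (Equiv.swap b₂ b'), ?_, ?_⟩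
    · simp only [Equiv.trans_apply, Equiv.swap_apply_left]
      exact Equiv.swap_apply_of_ne_of_ne hb₂a'.symm hab'
    · simp only [Equiv.trans_apply, ← hb2, Equiv.swap_apply_left]

private lemma ham_key {σ : Type*} [DecidableEq σ] {k : ℕ}
    (e : Equiv.Perm (Fin k)) (g : Fin k → Equiv.Perm σ) (x y : Fin k → σ) :
    hammingDist (fun j => g j (x (e.symm j))) (fun j => g j (y (e.symm j)))
      = hammingDist x y := by
  simp only [hammingDist]
  refine Finset.card_bij' (fun j _ => e.symm j) (fun i _ => e i) ?_ ?_ ?_ ?_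
  · intro j hj
    simp only [mem_filter, mem_univ, true_and] at hj ⊢
    exact fun hh => hj (by rw [hh])
  · intro i hi
    simp only [mem_filter, mem_univ, true_and] at hi ⊢
    simpa using fun hh => hi ((g (e i)).injective hh)
  · intro j _; simp
  · intro i _; simp

theorem intersection_size_depends_only_on_distance
    {σ : Type*} [Fintype σ] [DecidableEq σ] {k m : ℕ}
    (α β α' β' : Fin k → σ)
    (h : hammingDist α β = hammingDist α' β') :
    (Finset.univ.filter fun γ : Fin k → σ =>
        hammingDist α γ ≤ m ∧ hammingDist β γ ≤ m).card
      = (Finset.univ.filter fun γ : Fin k → σ =>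
        hammingDist α' γ ≤ m ∧ hammingDist β' γ ≤ m).card := by
  classical
  -- build permutation of indices matching disagreement sets
  have hcard : Fintype.card {i // α i ≠ β i} = Fintype.card {i // α' i ≠ β' i} := by
    simp only [Fintype.card_subtype]
    exact h
  let e0 : {i // α i ≠ β i} ≃ {i // α' i ≠ β' i} := Fintype.equivOfCardEq hcard
  let e : Equiv.Perm (Fin k) := e0.extendSubtype
  have he : ∀ i, (α i = β i) ↔ (α' (e i) = β' (e i)) := by
    intro i
    by_cases hi : α i = β i
    · have := e0.extendSubtype_not_mem i (by simpa using hi)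
      simpa using ⟨fun _ => by simpa using this, fun _ => hi⟩
    · have := e0.extendSubtype_mem i hi
      exact ⟨fun hh => absurd hh hi, fun hh => absurd hh this⟩
  have hiff : ∀ j : Fin k, (α (e.symm j) = β (e.symm j)) ↔ (α' j = β' j) := by
    intro j
    simpa using he (e.symm j)
  choose g hg1 hg2 using fun j => exists_perm_pair (α (e.symm j)) (β (e.symm j)) (α' j) (β' j) (hiff j)
  have hα' : α' = fun j => g j (α (e.symm j)) := funext fun j => (hg1 j).symm
  have hβ' : β' = fun j => g j (β (e.symm j)) := funext fun j => (hg2 j).symm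
  refine Finset.card_bij' (fun γ _ => fun j => g j (γ (e.symm j)))
    (fun δ _ => fun i => (g (e i)).symm (δ (e i))) ?_ ?_ ?_ ?_
  · intro γ hγ
    simp only [mem_filter, mem_univ, true_and] at hγ ⊢
    rw [hα', hβ']
    rw [ham_key e g α γ, ham_key e g β γ]
    exact hγ
  · intro δ hδ
    simp only [mem_filter, mem_univ, true_and] at hδ ⊢
    constructor
    · rw [← ham_key e g α (fun i => (g (e i)).symm (δ (e i)))]
      simp only [Equiv.apply_symm_apply, hg1]
      exact hδ.1
    · rw [← ham_key e g β (fun i => (g (e i)).symm (δ (e i)))]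
      simp only [Equiv.apply_symm_apply, hg2]
      exact hδ.2
  · intro γ _; funext i; simp
  · intro δ _; funext j; simp
end

section
/- Given two k-mers α and β over an alphabet of size s with d(α,β) = d, for all integers i, j ≥ 0: n^{ij}(α,β) = Σ_{t=0}^{⌊(i+j−d)/2⌋} (2d−i−j+2t choose d−i+t) · (d choose i+j−2t−d) · (s−2)^{i+j−2t−d} · (k−d choose t) · (s−1)^t, where binomial coefficients with negative or out-of-range arguments are zero (so the sum is empty/zero when i+j < d). -/
open Finset

set_option linter.unusedSectionVars false
set_option linter.unusedVariables false

namespace NijAux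


variable {k : ℕ} {σ : Type*} [Fintype σ] [DecidableEq σ]

def Tset (α β γ : Fin k → σ) : Finset (Fin k) :=
  univ.filter fun p => α p = β p ∧ α p ≠ γ p

def Zset (α β γ : Fin k → σ) : Finset (Fin k) :=
  univ.filter fun p => α p ≠ β p ∧ α p ≠ γ p ∧ β p ≠ γ p

def Xset (α β γ : Fin k → σ) : Finset (Fin k) :=
  univ.filter fun p => α p ≠ β p ∧ β p = γ p

def Yset (α β γ : Fin k → σ) : Finset (Fin k) :=
  univ.filter fun p => α p ≠ β p ∧ α p = γ p

lemma hd_alpha (α β γ : Fin k → σ) :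
    hammingDist α γ = (Tset α β γ).card + (Zset α β γ).card + (Xset α β γ).card := by
  have h : hammingDist α γ = (univ.filter fun p => α p ≠ γ p).card := rfl
  rw [h, Tset, Zset, Xset, Finset.card_filter, Finset.card_filter, Finset.card_filter,
    Finset.card_filter, ← Finset.sum_add_distrib, ← Finset.sum_add_distrib]
  refine Finset.sum_congr rfl fun p _ => ?_
  by_cases h1 : α p = β p <;> by_cases h2 : α p = γ p <;> by_cases h3 : β p = γ p <;>
    simp_all

lemma hd_beta (α β γ : Fin k → σ) :
    hammingDist β γ = (Tset α β γ).card + (Zset α β γ).card + (Yset α β γ).card := by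
  have h : hammingDist β γ = (univ.filter fun p => β p ≠ γ p).card := rfl
  rw [h, Tset, Zset, Yset, Finset.card_filter, Finset.card_filter, Finset.card_filter,
    Finset.card_filter, ← Finset.sum_add_distrib, ← Finset.sum_add_distrib]
  refine Finset.sum_congr rfl fun p _ => ?_
  by_cases h1 : α p = β p <;> by_cases h2 : α p = γ p <;> by_cases h3 : β p = γ p <;>
    simp_all

lemma hd_ab (α β γ : Fin k → σ) :
    hammingDist α β = (Zset α β γ).card + (Xset α β γ).card + (Yset α β γ).card := by
  have h : hammingDist α β = (univ.filter fun p => α p ≠ β p).card := rfl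
  rw [h, Zset, Xset, Yset, Finset.card_filter, Finset.card_filter, Finset.card_filter,
    Finset.card_filter, ← Finset.sum_add_distrib, ← Finset.sum_add_distrib]
  refine Finset.sum_congr rfl fun p _ => ?_
  by_cases h1 : α p = β p <;> by_cases h2 : α p = γ p <;> by_cases h3 : β p = γ p <;>
    simp_all


def Fam (α β : Fin k → σ) (T Z X : Finset (Fin k)) (p : Fin k) : Finset σ :=
  if p ∈ T then {α p}ᶜ else if p ∈ Z then ({α p, β p} : Finset σ)ᶜ
  else if p ∈ X then {β p} else {α p}

lemma fiber_eq_piFinset (α β : Fin k → σ) (T Z X : Finset (Fin k))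
    (hT : ∀ p ∈ T, α p = β p) (hZ : ∀ p ∈ Z, α p ≠ β p) (hX : ∀ p ∈ X, α p ≠ β p)
    (hZX : ∀ p ∈ X, p ∉ Z) :
    (univ.filter fun γ : Fin k → σ => Tset α β γ = T ∧ Zset α β γ = Z ∧ Xset α β γ = X)
      = Fintype.piFinset (Fam α β T Z X) := by
  ext γ
  simp only [mem_filter, mem_univ, true_and, Fintype.mem_piFinset]
  constructor
  · rintro ⟨rfl, rfl, rfl⟩ p
    unfold Fam
    by_cases h1 : p ∈ Tset α β γ
    · rw [if_pos h1]
      have h1' := (mem_filter.mp h1).2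
      simp only [mem_compl, mem_singleton]
      exact fun hc => h1'.2 hc.symm
    · rw [if_neg h1]
      by_cases h2 : p ∈ Zset α β γ
      · rw [if_pos h2]
        have h2' := (mem_filter.mp h2).2
        simp only [mem_compl, mem_insert, mem_singleton, not_or]
        exact ⟨fun hc => h2'.2.1 hc.symm, fun hc => h2'.2.2 hc.symm⟩
      · rw [if_neg h2]
        by_cases h3 : p ∈ Xset α β γ
        · rw [if_pos h3]
          have h3' := (mem_filter.mp h3).2
          simp only [mem_singleton]
          exact h3'.2.symm
        · rw [if_neg h3]
          simp only [Tset, Zset, Xset, mem_filter, mem_univ, true_and] at h1 h2 h3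
          simp only [mem_singleton]
          by_cases hab : α p = β p
          · by_contra hne; exact h1 ⟨hab, fun he => hne he.symm⟩
          · by_cases hbg : β p = γ p
            · exact absurd ⟨hab, hbg⟩ h3
            · by_contra hne; exact h2 ⟨hab, fun he => hne he.symm, hbg⟩
  · intro h
    have key : ∀ p, (p ∈ Tset α β γ ↔ p ∈ T) ∧ (p ∈ Zset α β γ ↔ p ∈ Z) ∧
        (p ∈ Xset α β γ ↔ p ∈ X) := by
      intro p
      have hp := h p
      unfold Fam at hp
      by_cases h1 : p ∈ T
      · rw [if_pos h1] at hp
        simp only [mem_compl, mem_singleton] at hp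
        have ha := hT p h1
        refine ⟨iff_of_true (mem_filter.mpr ⟨mem_univ p, ha, fun he => hp he.symm⟩) h1,
          iff_of_false (fun hc => (mem_filter.mp hc).2.1 ha) (fun hc => hZ p hc ha),
          iff_of_false (fun hc => (mem_filter.mp hc).2.1 ha) (fun hc => hX p hc ha)⟩
      · rw [if_neg h1] at hp
        by_cases h2 : p ∈ Z
        · rw [if_pos h2] at hp
          simp only [mem_compl, mem_insert, mem_singleton, not_or] at hp
          have hab := hZ p h2
          refine ⟨iff_of_false (fun hc => hab ((mem_filter.mp hc).2.1)) h1,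
            iff_of_true (mem_filter.mpr ⟨mem_univ p, hab, fun he => hp.1 he.symm,
              fun he => hp.2 he.symm⟩) h2,
            iff_of_false (fun hc => hp.2 (mem_filter.mp hc).2.2.symm)
              (fun hc => hZX p hc h2)⟩
        · rw [if_neg h2] at hp
          by_cases h3 : p ∈ X
          · rw [if_pos h3] at hp
            simp only [mem_singleton] at hp
            have hab := hX p h3
            refine ⟨iff_of_false (fun hc => hab ((mem_filter.mp hc).2.1)) h1,
              iff_of_false (fun hc => (mem_filter.mp hc).2.2.2 hp.symm) h2,
              iff_of_true (mem_filter.mpr ⟨mem_univ p, hab, hp.symm⟩) h3⟩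
          · rw [if_neg h3] at hp
            simp only [mem_singleton] at hp
            refine ⟨iff_of_false (fun hc => (mem_filter.mp hc).2.2 hp.symm) h1,
              iff_of_false (fun hc => (mem_filter.mp hc).2.2.1 hp.symm) h2,
              iff_of_false (fun hc =>
                (mem_filter.mp hc).2.1 ((mem_filter.mp hc).2.2.trans hp).symm) h3⟩
    exact ⟨Finset.ext fun p => (key p).1, Finset.ext fun p => (key p).2.1,
      Finset.ext fun p => (key p).2.2⟩

lemma piFinset_card (α β : Fin k → σ) (T Z X : Finset (Fin k))
    (hZ : ∀ p ∈ Z, α p ≠ β p) (hTZ : Disjoint T Z) :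
    (Fintype.piFinset (Fam α β T Z X)).card
      = (Fintype.card σ - 1) ^ T.card * (Fintype.card σ - 2) ^ Z.card := by
  rw [Fintype.card_piFinset]
  have hcard : ∀ p, (Fam α β T Z X p).card
      = if p ∈ T then Fintype.card σ - 1 else if p ∈ Z then Fintype.card σ - 2 else 1 := by
    intro p
    unfold Fam
    split_ifs with h1 h2 h3
    · simp [Finset.card_compl]
    · rw [Finset.card_compl, Finset.card_pair (hZ p h2)]
    · simp
    · simp
  have e0 : ∏ p, (Fam α β T Z X p).card
      = ∏ p, (if p ∈ T then Fintype.card σ - 1 else if p ∈ Z then Fintype.card σ - 2 else 1) :=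
    Finset.prod_congr rfl fun p _ => hcard p
  have e1 : ∏ p, (if p ∈ T then Fintype.card σ - 1 else if p ∈ Z then Fintype.card σ - 2 else 1)
      = ∏ p ∈ T ∪ Z, (if p ∈ T then Fintype.card σ - 1 else if p ∈ Z then Fintype.card σ - 2 else 1) := by
    refine (Finset.prod_subset (Finset.subset_univ _) fun p _ hp => ?_).symm
    simp only [mem_union, not_or] at hp
    rw [if_neg hp.1, if_neg hp.2]
  have e2 : ∏ p ∈ T, (if p ∈ T then Fintype.card σ - 1 else if p ∈ Z then Fintype.card σ - 2 else 1)
      = (Fintype.card σ - 1) ^ T.card := by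
    rw [Finset.prod_congr rfl fun p hp => if_pos hp]; exact Finset.prod_const _
  have e3 : ∏ p ∈ Z, (if p ∈ T then Fintype.card σ - 1 else if p ∈ Z then Fintype.card σ - 2 else 1)
      = (Fintype.card σ - 2) ^ Z.card := by
    rw [Finset.prod_congr rfl (fun p hp => by
      rw [if_neg (Finset.disjoint_right.mp hTZ hp), if_pos hp])]
    exact Finset.prod_const _
  rw [e0, e1, Finset.prod_union hTZ, e2, e3]


end NijAux

open NijAux in

/-- Closed form for `n^{ij}(α,β)`, the number of `k`-mers at distance exactly `i`
from `α` and exactly `j` from `β`, where `d(α,β) = d` and `|Σ| = s ≥ 2`.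
Terms whose binomial coefficients would have a negative argument are zero,
which is expressed by the `if` guard (natural subtraction is otherwise exact). -/
theorem nij_closed_form
    {σ : Type*} [Fintype σ] [DecidableEq σ] {s k d : ℕ}
    (hs : Fintype.card σ = s) (hs2 : 2 ≤ s)
    (α β : Fin k → σ) (hd : hammingDist α β = d) (i j : ℕ) :
    (Finset.univ.filter fun γ : Fin k → σ =>
        hammingDist α γ = i ∧ hammingDist β γ = j).card
      = ∑ t ∈ Finset.range ((i + j - d) / 2 + 1),
          if i ≤ d + t ∧ d + 2 * t ≤ i + j then
            (2 * d + 2 * t - (i + j)).choose (d + t - i)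
              * d.choose (i + j - 2 * t - d)
              * (s - 2) ^ (i + j - 2 * t - d)
              * (k - d).choose t
              * (s - 1) ^ t
          else 0 := by
  classical
  have hmem1 : ∀ γ ∈ (univ.filter fun γ : Fin k → σ =>
      hammingDist α γ = i ∧ hammingDist β γ = j),
      (Tset α β γ).card ∈ Finset.range ((i + j - d) / 2 + 1) := by
    intro γ hγ
    obtain ⟨-, hi, hj⟩ := mem_filter.mp hγ
    have e1 := hd_alpha α β γ
    have e2 := hd_beta α β γ
    have e3 := hd_ab α β γ
    rw [hi] at e1; rw [hj] at e2; rw [hd] at e3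
    rw [Finset.mem_range]
    omega
  rw [Finset.card_eq_sum_card_fiberwise hmem1]
  refine Finset.sum_congr rfl fun t _ => ?_
  rw [Finset.filter_filter]
  by_cases hC : i ≤ d + t ∧ j ≤ d + t ∧ d + 2 * t ≤ i + j ∧ i + j ≤ 2 * d + 2 * t
  · -- positive case
    obtain ⟨hC1, hC2, hC3, hC4⟩ := hC
    set z := i + j - 2 * t - d with hz
    set x := d + t - j with hx
    set D := univ.filter fun p : Fin k => α p ≠ β p with hDdef
    set E := univ.filter fun p : Fin k => α p = β p with hEdef
    have hDcard : D.card = d := hd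
    have hEcard : E.card = k - d := by
      have hcompl : E = Dᶜ := by
        ext p; simp [hEdef, hDdef]
      rw [hcompl, Finset.card_compl, hDcard, Fintype.card_fin]
    set Sp : Finset (Finset (Fin k) × Σ _ : Finset (Fin k), Finset (Fin k)) :=
      E.powersetCard t ×ˢ ((D.powersetCard z).sigma fun Z => (D \ Z).powersetCard x) with hSp
    have hmem2 : ∀ γ ∈ (univ.filter fun γ : Fin k → σ =>
        (hammingDist α γ = i ∧ hammingDist β γ = j) ∧ (Tset α β γ).card = t),
        ((Tset α β γ, ⟨Zset α β γ, Xset α β γ⟩) :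
          Finset (Fin k) × Σ _ : Finset (Fin k), Finset (Fin k)) ∈ Sp := by
      intro γ hγ
      obtain ⟨-, ⟨hi, hj⟩, htc⟩ := mem_filter.mp hγ
      have e1 := hd_alpha α β γ
      have e2 := hd_beta α β γ
      have e3 := hd_ab α β γ
      rw [hi, htc] at e1; rw [hj, htc] at e2; rw [hd] at e3
      rw [hSp]
      simp only [Finset.mem_product, Finset.mem_sigma, Finset.mem_powersetCard]
      refine ⟨⟨fun p hp => ?_, htc⟩, ⟨fun p hp => ?_, by omega⟩, fun p hp => ?_, by omega⟩
      · rw [hEdef, mem_filter]; exact ⟨mem_univ p, (mem_filter.mp hp).2.1⟩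
      · rw [hDdef, mem_filter]; exact ⟨mem_univ p, (mem_filter.mp hp).2.1⟩
      · obtain ⟨-, hab, hbg⟩ := mem_filter.mp hp
        rw [mem_sdiff, hDdef, mem_filter]
        exact ⟨⟨mem_univ p, hab⟩, fun hc => (mem_filter.mp hc).2.2.2 hbg⟩
    rw [Finset.card_eq_sum_card_fiberwise hmem2]
    have hfib : ∀ q ∈ Sp, (Finset.filter
        (fun γ : Fin k → σ => ((Tset α β γ, ⟨Zset α β γ, Xset α β γ⟩) :
          Finset (Fin k) × Σ _ : Finset (Fin k), Finset (Fin k)) = q)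
        (univ.filter fun γ : Fin k → σ =>
          (hammingDist α γ = i ∧ hammingDist β γ = j) ∧ (Tset α β γ).card = t)).card
        = (Fintype.card σ - 1) ^ t * (Fintype.card σ - 2) ^ z := by
      rintro ⟨T, Z, X⟩ hq
      rw [hSp, Finset.mem_product, Finset.mem_sigma, Finset.mem_powersetCard,
        Finset.mem_powersetCard, Finset.mem_powersetCard] at hq
      obtain ⟨⟨hTsub, hTcard⟩, ⟨hZsub, hZcard⟩, hXsub, hXcard⟩ := hq
      have hT : ∀ p ∈ T, α p = β p := fun p hp => (mem_filter.mp (hTsub hp)).2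
      have hZ : ∀ p ∈ Z, α p ≠ β p := fun p hp => (mem_filter.mp (hZsub hp)).2
      have hX : ∀ p ∈ X, α p ≠ β p := fun p hp =>
        (mem_filter.mp (mem_sdiff.mp (hXsub hp)).1).2
      have hZX : ∀ p ∈ X, p ∉ Z := fun p hp => (mem_sdiff.mp (hXsub hp)).2
      have hTZ : Disjoint T Z := Finset.disjoint_left.mpr fun {p} hp hc => hZ p hc (hT p hp)
      have hXD : ∀ p ∈ X, p ∈ D := fun p hp => (mem_sdiff.mp (hXsub hp)).1
      have heq : (Finset.filter
          (fun γ : Fin k → σ => ((Tset α β γ, ⟨Zset α β γ, Xset α β γ⟩) :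
            Finset (Fin k) × Σ _ : Finset (Fin k), Finset (Fin k)) = (T, ⟨Z, X⟩))
          (univ.filter fun γ : Fin k → σ =>
            (hammingDist α γ = i ∧ hammingDist β γ = j) ∧ (Tset α β γ).card = t))
          = univ.filter fun γ : Fin k → σ =>
            Tset α β γ = T ∧ Zset α β γ = Z ∧ Xset α β γ = X := by
        rw [Finset.filter_filter]
        refine Finset.filter_congr fun γ _ => ?_
        constructor
        · rintro ⟨-, hq⟩
          simp only [Prod.mk.injEq, Sigma.mk.inj_iff, heq_eq_eq] at hq
          exact ⟨hq.1, hq.2.1, hq.2.2⟩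
        · rintro ⟨hTe, hZe, hXe⟩
          have e1 := hd_alpha α β γ
          have e2 := hd_beta α β γ
          have e3 := hd_ab α β γ
          rw [hd] at e3
          rw [hTe, hZe, hXe, hTcard, hZcard, hXcard] at e1
          rw [hTe, hZe, hTcard, hZcard] at e2
          rw [hZe, hXe, hZcard, hXcard] at e3
          refine ⟨⟨⟨by omega, by omega⟩, by rw [hTe, hTcard]⟩, ?_⟩
          rw [hTe, hZe, hXe]
      rw [heq, fiber_eq_piFinset α β T Z X hT hZ hX hZX,
        piFinset_card α β T Z X hZ hTZ, hTcard, hZcard]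
    rw [Finset.sum_congr rfl hfib, Finset.sum_const, hSp, Finset.card_product,
      Finset.card_sigma, Finset.card_powersetCard, hEcard]
    have hsig : ∑ Z ∈ D.powersetCard z, ((D \ Z).powersetCard x).card
        = d.choose z * (d - z).choose x := by
      have hterm : ∀ Z ∈ D.powersetCard z, ((D \ Z).powersetCard x).card
          = (d - z).choose x := by
        intro Z hZm
        obtain ⟨hZs, hZc⟩ := Finset.mem_powersetCard.mp hZm
        rw [Finset.card_powersetCard, Finset.card_sdiff_of_subset hZs, hDcard, hZc]
      rw [Finset.sum_congr rfl hterm, Finset.sum_const, smul_eq_mul,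
        Finset.card_powersetCard, hDcard]
    rw [hsig, smul_eq_mul, hs, if_pos ⟨hC1, hC3⟩]
    rw [show 2 * d + 2 * t - (i + j) = d - z from by omega,
      show d + t - i = d - z - x from by omega,
      Nat.choose_symm (show x ≤ d - z from by omega)]
    ring
  · -- negative case
    have hL : (univ.filter fun γ : Fin k → σ =>
        (hammingDist α γ = i ∧ hammingDist β γ = j) ∧ (Tset α β γ).card = t).card = 0 := by
      rw [Finset.card_eq_zero, Finset.filter_eq_empty_iff]
      rintro γ - ⟨⟨hi, hj⟩, htc⟩
      have e1 := hd_alpha α β γ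
      have e2 := hd_beta α β γ
      have e3 := hd_ab α β γ
      rw [hi, htc] at e1; rw [hj, htc] at e2; rw [hd] at e3
      omega
    have hR : (if i ≤ d + t ∧ d + 2 * t ≤ i + j then
        (2 * d + 2 * t - (i + j)).choose (d + t - i)
          * d.choose (i + j - 2 * t - d) * (s - 2) ^ (i + j - 2 * t - d)
          * (k - d).choose t * (s - 1) ^ t else 0) = 0 := by
      by_cases hg : i ≤ d + t ∧ d + 2 * t ≤ i + j
      · rw [if_pos hg]
        rcases (show 2 * d + 2 * t < i + j ∨ (i + j ≤ 2 * d + 2 * t ∧ d + t < j) by omega)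
          with h | h
        · rw [Nat.choose_eq_zero_of_lt (show d < i + j - 2 * t - d by omega)]
          ring
        · rw [Nat.choose_eq_zero_of_lt
            (show 2 * d + 2 * t - (i + j) < d + t - i by omega)]
          ring
      · rw [if_neg hg]
    rw [hL, hR]
end
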